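/- arXiv:2402.14953 — 3 statements merged into one kernel-verified Lean document; each statement's English description precedes it below -/
import Mathlib

section
/- If a finite simple graph G is self-complementary (i.e. G is isomorphic to its complement Ḡ), then ρ_T(G) = ρ_T̂(G). -/
/-- A min-plus `k`-tropical dot product representation of `G` with threshold `t`:
distinct vertices `x, y` are adjacent iff `min_{1 ≤ i ≤ k} (f(x)_i + f(y)_i) ≥ t`
(equivalently, every coordinate sum is at least `t`). -/
def MinPlusRep {V : Type*} (G : SimpleGraph V) (k : ℕ) (f : V → Fin k → ℝ) (t : ℝ) : Prop :=
  0 < t ∧ ∀ x y : V, x ≠ y → (G.Adj x y ↔ ∀ i : Fin k, t ≤ f x i + f y i)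

/-- The min-plus tropical dot product dimension `ρ_T(G)`. -/
noncomputable def rhoT {V : Type*} (G : SimpleGraph V) : ℕ :=
  sInf {k : ℕ | 0 < k ∧ ∃ (f : V → Fin k → ℝ) (t : ℝ), MinPlusRep G k f t}

/-- A max-plus `k`-tropical dot product representation of `G` with threshold `t`:
distinct vertices `x, y` are adjacent iff `max_{1 ≤ i ≤ k} (f(x)_i + f(y)_i) ≥ t`
(equivalently, some coordinate sum is at least `t`). -/
def MaxPlusRep {V : Type*} (G : SimpleGraph V) (k : ℕ) (f : V → Fin k → ℝ) (t : ℝ) : Prop :=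
  0 < t ∧ ∀ x y : V, x ≠ y → (G.Adj x y ↔ ∃ i : Fin k, t ≤ f x i + f y i)

/-- The max-plus tropical dot product dimension `ρ_T̂(G)`. -/
noncomputable def rhoTHat {V : Type*} (G : SimpleGraph V) : ℕ :=
  sInf {k : ℕ | 0 < k ∧ ∃ (f : V → Fin k → ℝ) (t : ℝ), MaxPlusRep G k f t}

/-!
Translating every vertex vector `f x` to `c - f x` turns each coordinate sum `a` into `2c - a`,
so "`a ≥ t`" becomes "`2c - a ≤ 2c - t`". Since the graph is finite, the sums below `t` stay
below some `s < t`, so the threshold `2c - s` (positive for `c` large) separates exactly the sums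
that were below `t`. Hence a min-plus representation of `G` yields a max-plus representation of
`Ḡ` of the same dimension and vice versa, i.e. `ρ_T(G) = ρ_T̂(Ḡ)`; for self-complementary `G`
the right-hand side is `ρ_T̂(G)`.
-/

lemma exists_lt_forall_le_of_lt {J : Type*} [Finite J] (φ : J → ℝ) (t : ℝ) :
    ∃ s < t, ∀ j, φ j < t → φ j ≤ s := by
  set T : Set ℝ := insert (t - 1) (φ '' {j | φ j < t})
  have hT : T.Finite := ((Set.toFinite _).image φ).insert _
  refine ⟨sSup T, ?_, fun j hj => le_csSup hT.bddAbove (Or.inr ⟨j, hj, rfl⟩)⟩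
  rcases (Set.insert_nonempty _ _).csSup_mem hT with h | ⟨j, hj, h⟩
  · linarith
  · rw [← h]; exact hj

lemma exists_reflect_threshold {V ι : Type*} [Finite V] [Finite ι] (f : V → ι → ℝ) (t : ℝ) :
    ∃ (g : V → ι → ℝ) (t' : ℝ), 0 < t' ∧
      ∀ x y i, (t' ≤ g x i + g y i ↔ f x i + f y i < t) := by
  obtain ⟨s, hst, hs⟩ :=
    exists_lt_forall_le_of_lt (fun p : V × V × ι => f p.1 p.2.2 + f p.2.1 p.2.2) t
  obtain ⟨c, hc⟩ := exists_gt (s / 2)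
  refine ⟨fun x i => c - f x i, 2 * c - s, by linarith, fun x y i => ?_⟩
  constructor
  · intro h; linarith
  · intro h; linarith [hs (x, y, i) h]

lemma MinPlusRep.exists_maxPlusRep_compl {V : Type*} [Finite V] {G : SimpleGraph V} {k : ℕ}
    {f : V → Fin k → ℝ} {t : ℝ} (hf : MinPlusRep G k f t) :
    ∃ (g : V → Fin k → ℝ) (t' : ℝ), MaxPlusRep Gᶜ k g t' := by
  obtain ⟨g, t', ht', hg⟩ := exists_reflect_threshold f t
  refine ⟨g, t', ht', fun x y hxy => ?_⟩
  simp only [SimpleGraph.compl_adj, hf.2 x y hxy, hxy, hg, ne_eq, not_false_eq_true, true_and,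
    not_forall, not_le]

lemma MaxPlusRep.exists_minPlusRep_compl {V : Type*} [Finite V] {G : SimpleGraph V} {k : ℕ}
    {f : V → Fin k → ℝ} {t : ℝ} (hf : MaxPlusRep G k f t) :
    ∃ (g : V → Fin k → ℝ) (t' : ℝ), MinPlusRep Gᶜ k g t' := by
  obtain ⟨g, t', ht', hg⟩ := exists_reflect_threshold f t
  refine ⟨g, t', ht', fun x y hxy => ?_⟩
  simp only [SimpleGraph.compl_adj, hf.2 x y hxy, hxy, hg, ne_eq, not_false_eq_true, true_and,
    not_exists, not_le]

lemma rhoT_eq_rhoTHat_compl {V : Type*} [Finite V] (G : SimpleGraph V) : rhoT G = rhoTHat Gᶜ := by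
  unfold rhoT rhoTHat
  congr 1
  ext k
  refine and_congr_right fun _ => ⟨?_, ?_⟩
  · rintro ⟨f, t, hf⟩
    exact hf.exists_maxPlusRep_compl
  · rintro ⟨f, t, hf⟩
    simpa only [compl_compl] using hf.exists_minPlusRep_compl

lemma MaxPlusRep.comp_iso {V W : Type*} {G : SimpleGraph V} {H : SimpleGraph W} (e : G ≃g H)
    {k : ℕ} {f : W → Fin k → ℝ} {t : ℝ} (hf : MaxPlusRep H k f t) :
    MaxPlusRep G k (f ∘ e) t := by
  refine ⟨hf.1, fun x y hxy => ?_⟩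
  rw [← e.map_adj_iff]
  exact hf.2 (e x) (e y) (e.injective.ne hxy)

lemma rhoTHat_congr {V W : Type*} {G : SimpleGraph V} {H : SimpleGraph W} (e : G ≃g H) :
    rhoTHat G = rhoTHat H := by
  unfold rhoTHat
  congr 1
  ext k
  refine and_congr_right fun _ => ⟨?_, ?_⟩
  · rintro ⟨f, t, hf⟩
    exact ⟨f ∘ e.symm, t, hf.comp_iso e.symm⟩
  · rintro ⟨f, t, hf⟩
    exact ⟨f ∘ e, t, hf.comp_iso e⟩

/-- If `G` is self-complementary then `ρ_T(G) = ρ_T̂(G)`. -/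
theorem stmt_10 {V : Type*} [Fintype V] (G : SimpleGraph V) (h : Nonempty (G ≃g Gᶜ)) :
    rhoT G = rhoTHat G := by
  obtain ⟨e⟩ := h
  rw [rhoT_eq_rhoTHat_compl, rhoTHat_congr e]
end

section
/- If G is a complete k-partite graph, then ρ_T(G) ≤ k. -/
/-! Send a vertex in part `j` to the vector that is `0` in coordinate `j` and `1` elsewhere.
Two such vectors sum to at least `1` in every coordinate exactly when their zeros sit in
different coordinates, i.e. when the vertices lie in different parts. -/

def partVector {k : ℕ} (j : Fin k) : Fin k → ℝ := fun i => if j = i then 0 else 1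

lemma one_le_partVector_add_iff {k : ℕ} (a b : Fin k) :
    (∀ i, 1 ≤ partVector a i + partVector b i) ↔ a ≠ b := by
  constructor
  · rintro h rfl
    have := h a
    norm_num [partVector] at this
  · intro hab i
    unfold partVector
    split_ifs <;> simp_all

lemma minPlusRep_partVector {V : Type*} (G : SimpleGraph V) {k : ℕ} (P : V → Fin k)
    (hadj : ∀ x y : V, G.Adj x y ↔ P x ≠ P y) :
    MinPlusRep G k (fun x => partVector (P x)) 1 :=
  ⟨one_pos, fun x y _ => (hadj x y).trans (one_le_partVector_add_iff _ _).symm⟩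

lemma rhoT_le_of_minPlusRep {V : Type*} {G : SimpleGraph V} {k : ℕ} (hk : 0 < k)
    {f : V → Fin k → ℝ} {t : ℝ} (hf : MinPlusRep G k f t) : rhoT G ≤ k :=
  Nat.sInf_le ⟨hk, f, t, hf⟩

theorem stmt_15_general {V : Type*} [Nonempty V] (G : SimpleGraph V) (k : ℕ)
    (P : V → Fin k)
    (hadj : ∀ x y : V, G.Adj x y ↔ P x ≠ P y) :
    rhoT G ≤ k :=
  rhoT_le_of_minPlusRep (Fin.pos_iff_nonempty.mpr ⟨P (Classical.arbitrary V)⟩)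
    (minPlusRep_partVector G P hadj)

/-- If `G` is a complete `k`-partite graph (parts are the fibers of a surjection
`P : V → Fin k`, and two distinct vertices are adjacent iff they lie in different parts),
then `ρ_T(G) ≤ k`. -/
theorem stmt_15 {V : Type*} [Fintype V] [Nonempty V] (G : SimpleGraph V) (k : ℕ)
    (P : V → Fin k) (hsurj : Function.Surjective P)
    (hadj : ∀ x y : V, G.Adj x y ↔ P x ≠ P y) :
    rhoT G ≤ k :=
  stmt_15_general G k P hadj
end

section
/- If G is a complete k-partite graph in which exactly m of the partite sets have cardinality 1, where m < k, and the remaining k − m partite sets have size greater than 1, then ρ_T(G) = k − m. -/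
/-!
Upper bound: give each non-singleton part its own coordinate, on which the vertices of that part
are `0` and all other vertices are `1`; with threshold `1`, a pair fails exactly on the coordinate
of a part containing both. Singleton parts need no coordinate, since they contain no non-edge.

Lower bound: choose a non-edge `x_i y_i` inside every non-singleton part `i` and a coordinate
`c i` witnessing it, `f(x_i)_{c i} + f(y_i)_{c i} < t`. If `c i = c j` for `i ≠ j`, the edges
`x_i x_j` and `y_i y_j` give `2t` as a lower bound for the same sum of four numbers that the two
non-edges bound strictly above by `2t`. So `c` is injective.
-/

namespace MinPlusRep

variable {V : Type*} {G : SimpleGraph V} {d : ℕ} {f : V → Fin d → ℝ} {t : ℝ}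

theorem card_le_of_nonadj_pairs (hrep : MinPlusRep G d f t) {ι : Type*} [Fintype ι]
    (x y : ι → V) (hne : ∀ i, x i ≠ y i) (hnadj : ∀ i, ¬ G.Adj (x i) (y i))
    (hx : ∀ i j, i ≠ j → G.Adj (x i) (x j)) (hy : ∀ i j, i ≠ j → G.Adj (y i) (y j)) :
    Fintype.card ι ≤ d := by
  have hwitness : ∀ i, ∃ c, f (x i) c + f (y i) c < t := fun i => by
    simpa using (hrep.2 _ _ (hne i)).not.mp (hnadj i)
  choose c hc using hwitness
  suffices Function.Injective c by simpa using Fintype.card_le_of_injective c this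
  intro i j hij
  by_contra hne_ij
  have hxx := (hrep.2 _ _ (hx i j hne_ij).ne).mp (hx i j hne_ij) (c i)
  have hyy := (hrep.2 _ _ (hy i j hne_ij).ne).mp (hy i j hne_ij) (c i)
  have hcj := hc j
  rw [← hij] at hcj
  linarith [hc i]

end MinPlusRep

theorem minPlusRep_partIndicator {V ι : Type*} [DecidableEq ι] {G : SimpleGraph V} {P : V → ι}
    (hadj : ∀ x y, G.Adj x y ↔ P x ≠ P y) {d : ℕ} (g : Fin d → ι) (hg : ∀ x y, x ≠ y → P x = P y → P x ∈ Set.range g) :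
    MinPlusRep G d (fun x j => if P x = g j then 0 else 1) 1 := by
  refine ⟨one_pos, fun x y hxy => ?_⟩
  rw [hadj]
  constructor
  · intro hP j
    by_cases hx : P x = g j
    · have hy : P y ≠ g j := fun h => hP (hx.trans h.symm)
      simp [hx, hy]
    · by_cases hy : P y = g j <;> simp [hx, hy]
  · intro h hP
    obtain ⟨j, hj⟩ := hg x y hxy hP
    have := h j
    simp only [← hj, ← hP, if_true] at this
    norm_num at this

theorem rhoT_eq_of_minPlusRep {V : Type*} {G : SimpleGraph V} {n : ℕ} (hn : 0 < n)
    {f : V → Fin n → ℝ} {t : ℝ} (hrep : MinPlusRep G n f t)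
    (hmin : ∀ d (f : V → Fin d → ℝ) t, MinPlusRep G d f t → n ≤ d) :
    rhoT G = n :=
  le_antisymm (Nat.sInf_le ⟨hn, f, t, hrep⟩)
    (le_csInf ⟨n, hn, f, t, hrep⟩ fun _ ⟨_, f, t, h⟩ => hmin _ f t h)

/-- If `G` is a complete `k`-partite graph with exactly `m < k` partite sets of size 1
and all other partite sets of size greater than 1, then `ρ_T(G) = k − m`. -/
theorem stmt_17 {V : Type*} [Fintype V] (G : SimpleGraph V) (k m : ℕ) (hm : m < k)
    (P : V → Fin k) (hadj : ∀ x y : V, G.Adj x y ↔ P x ≠ P y)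
    (S : Finset (Fin k)) (hS : S.card = m)
    (h1 : ∀ i ∈ S, Fintype.card {x : V // P x = i} = 1)
    (h2 : ∀ i ∉ S, 1 < Fintype.card {x : V // P x = i}) :
    rhoT G = k - m := by
  have hcard : Fintype.card (Sᶜ : Finset (Fin k)) = k - m := by
    simp [hS]
  have hpart : ∀ x y, x ≠ y → P x = P y → P x ∈ Sᶜ := fun x y hxy hP => by
    refine Finset.mem_compl.mpr fun hx => hxy ?_
    have := Fintype.card_le_one_iff.mp (h1 _ hx).le ⟨x, rfl⟩ ⟨y, hP.symm⟩
    exact congrArg Subtype.val this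
  have hpair : ∀ i : (Sᶜ : Finset (Fin k)), ∃ x y : V, P x = i ∧ P y = i ∧ x ≠ y := fun i => by
    obtain ⟨⟨x, hx⟩, ⟨y, hy⟩, hne⟩ :=
      Fintype.one_lt_card_iff.mp (h2 i (Finset.mem_compl.mp i.2))
    exact ⟨x, y, hx, hy, fun h => hne (Subtype.ext h)⟩
  choose x y hPx hPy hne using hpair
  let e := Fintype.equivFinOfCardEq hcard
  refine rhoT_eq_of_minPlusRep (Nat.sub_pos_of_lt hm)
    (minPlusRep_partIndicator hadj (fun j => (e.symm j : Fin k)) fun x y hxy hP =>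
      ⟨e ⟨P x, hpart x y hxy hP⟩, by simp⟩) fun d f t hrep => ?_
  rw [← hcard]
  exact hrep.card_le_of_nonadj_pairs x y hne (fun i => by simp [hadj, hPx, hPy])
    (fun i j hij => (hadj _ _).mpr (by rw [hPx, hPx]; exact Subtype.coe_injective.ne hij))
    (fun i j hij => (hadj _ _).mpr (by rw [hPy, hPy]; exact Subtype.coe_injective.ne hij))
end
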